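/- Neither implication between +σ and +ω holds in general: there exists a consistent defeasible theory D and literals d, c such that D ⊢ +ω d and D ⊢ −σ d, and D ⊢ +σ ¬c and D ⊢ −ω ¬c. -/

import Mathlib

namespace DL

abbrev Atom := ℕ

/-- A literal: an atom with a polarity. -/
structure Lit where
  atom : Atom
  pos : Bool
deriving DecidableEq

/-- The complement `∼p` of a literal. -/
def Lit.neg (l : Lit) : Lit := ⟨l.atom, !l.pos⟩

/-- A defeasible rule: a finite set of antecedent literals and a head literal. -/
structure Rule where
  ante : Finset Lit
  head : Lit
deriving DecidableEq

/-- A defeasible theory: facts, defeasible rules, and a superiority relation. -/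
structure DTheory where
  facts : Finset Lit
  rules : Finset Rule
  sup : Rule → Rule → Prop

/-- A superiority relation is acyclic iff its transitive closure is irreflexive. -/
def Acyclic (sup : Rule → Rule → Prop) : Prop :=
  Irreflexive (Relation.TransGen sup)

def DTheory.FactsConsistent (D : DTheory) : Prop :=
  ∀ l ∈ D.facts, l.neg ∉ D.facts

/-- Well-formedness of a defeasible theory: consistent facts, acyclic superiority
relation defined on the rules of the theory. -/
def DTheory.WellFormed (D : DTheory) : Prop :=
  D.FactsConsistent ∧ Acyclic D.sup ∧ ∀ r s, D.sup r s → r ∈ D.rules ∧ s ∈ D.rules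

/-- Proof tags: Δ, Σ, σ, ω, φ, ∂. -/
inductive Tag | delta | Sig | sgm | omg | phi | prt
deriving DecidableEq

/-- A tagged literal: a tag, a sign (`true` = `+`, `false` = `−`), and a literal. -/
abbrev TLit := Tag × Bool × Lit

/-- The proof conditions of Defeasible Logic (defeasible rules only), relative to
the preceding part `P` of a proof sequence. -/
def Cond (D : DTheory) (P : List TLit) : Tag → Bool → Lit → Prop
  | .delta, true, q => q ∈ D.facts
  | .delta, false, q => q ∉ D.facts
  | .Sig, true, q =>
      (Tag.delta, true, q) ∈ P ∨
      ∃ r ∈ D.rules, r.head = q ∧ ∀ a ∈ r.ante, (Tag.Sig, true, a) ∈ P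
  | .Sig, false, q =>
      (Tag.delta, true, q) ∉ P ∧
      ∀ r ∈ D.rules, r.head = q → ∃ a ∈ r.ante, (Tag.Sig, false, a) ∈ P
  | .sgm, true, q =>
      (Tag.delta, true, q) ∈ P ∨
      ∃ r ∈ D.rules, r.head = q ∧ (∀ a ∈ r.ante, (Tag.sgm, true, a) ∈ P) ∧
        ∀ s ∈ D.rules, s.head = q.neg →
          (∃ a ∈ s.ante, (Tag.prt, false, a) ∈ P) ∨ ¬ D.sup s r
  | .sgm, false, q =>
      (Tag.delta, true, q) ∉ P ∧
      ∀ r ∈ D.rules, r.head = q →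
        (∃ a ∈ r.ante, (Tag.sgm, false, a) ∈ P) ∨
        ∃ s ∈ D.rules, s.head = q.neg ∧ (∀ a ∈ s.ante, (Tag.prt, true, a) ∈ P) ∧ D.sup s r
  | .omg, true, q =>
      (Tag.delta, true, q) ∈ P ∨
      ∃ r ∈ D.rules, r.head = q ∧ ∀ a ∈ r.ante, (Tag.prt, true, a) ∈ P
  | .omg, false, q =>
      (Tag.delta, true, q) ∉ P ∧
      ∀ r ∈ D.rules, r.head = q → ∃ a ∈ r.ante, (Tag.prt, false, a) ∈ P
  | .phi, true, q =>
      (Tag.delta, true, q) ∈ P ∨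
      ∃ r ∈ D.rules, r.head = q ∧ (∀ a ∈ r.ante, (Tag.phi, true, a) ∈ P) ∧
        ∀ s ∈ D.rules, s.head = q.neg → ∃ a ∈ s.ante, (Tag.Sig, false, a) ∈ P
  | .phi, false, q =>
      (Tag.delta, true, q) ∉ P ∧
      ∀ r ∈ D.rules, r.head = q →
        (∃ a ∈ r.ante, (Tag.phi, false, a) ∈ P) ∨
        ∃ s ∈ D.rules, s.head = q.neg ∧ ∀ a ∈ s.ante, (Tag.Sig, true, a) ∈ P
  | .prt, true, q =>
      (Tag.delta, true, q) ∈ P ∨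
      ((Tag.delta, false, q.neg) ∈ P ∧
       (∃ r ∈ D.rules, r.head = q ∧ ∀ a ∈ r.ante, (Tag.prt, true, a) ∈ P) ∧
       ∀ s ∈ D.rules, s.head = q.neg →
         (∃ a ∈ s.ante, (Tag.prt, false, a) ∈ P) ∨
         ∃ t ∈ D.rules, t.head = q ∧ (∀ a ∈ t.ante, (Tag.prt, true, a) ∈ P) ∧ D.sup t s)
  | .prt, false, q =>
      (Tag.delta, true, q) ∉ P ∧
      ((Tag.delta, true, q.neg) ∈ P ∨
       (∀ r ∈ D.rules, r.head = q → ∃ a ∈ r.ante, (Tag.prt, false, a) ∈ P) ∨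
       ∃ s ∈ D.rules, s.head = q.neg ∧ (∀ a ∈ s.ante, (Tag.prt, true, a) ∈ P) ∧
         ∀ t ∈ D.rules, t.head = q →
           (∃ a ∈ t.ante, (Tag.prt, false, a) ∈ P) ∨ ¬ D.sup t s)

/-- A proof (derivation) is a finite sequence of tagged literals each of which
satisfies the proof condition relative to the preceding part of the sequence. -/
inductive ValidProof (D : DTheory) : List TLit → Prop
  | nil : ValidProof D []
  | snoc {P : List TLit} {t : Tag} {s : Bool} {q : Lit} :
      ValidProof D P → Cond D P t s q → ValidProof D (P ++ [(t, s, q)])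

/-- `D ⊢ ±# q`: some valid proof in `D` contains the tagged literal. -/
def Proves (D : DTheory) (t : Tag) (s : Bool) (q : Lit) : Prop :=
  ∃ P, ValidProof D P ∧ (t, s, q) ∈ P

/-- A theory is consistent iff it never defeasibly proves both a literal and
its complement. -/
def Consistent (D : DTheory) : Prop :=
  ∀ p : Lit, ¬ (Proves D .prt true p ∧ Proves D .prt true p.neg)

/-- `a` depends on `b` iff `b = a`, or for every rule for `a` either `b` is an
antecedent or some antecedent depends on `b` (least such relation,
impredicatively encoded). -/
def DependsOn (D : DTheory) (a b : Lit) : Prop :=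
  ∀ S : Lit → Lit → Prop,
    (∀ x, S x x) →
    (∀ x y, (∀ r ∈ D.rules, r.head = x → y ∈ r.ante ∨ ∃ c ∈ r.ante, S c y) → S x y) →
    S a b

/-- `p` is ∂-unreachable iff every rule for `p` either has two antecedents
depending on complementary literals or has a ∂-unreachable antecedent
(least such predicate, impredicatively encoded). -/
def Unreachable (D : DTheory) (p : Lit) : Prop :=
  ∀ S : Lit → Prop,
    (∀ x, (∀ r ∈ D.rules, r.head = x →
        (∃ l : Lit, ∃ a ∈ r.ante, ∃ b ∈ r.ante, DependsOn D a l ∧ DependsOn D b l.neg) ∨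
        ∃ d ∈ r.ante, S d) → S x) →
    S p

/-- The literal `p` appears in the theory `D` (its atom occurs in `D`). -/
def AppearsIn (p : Lit) (D : DTheory) : Prop :=
  (∃ l ∈ D.facts, l.atom = p.atom) ∨
  ∃ r ∈ D.rules, r.head.atom = p.atom ∨ ∃ l ∈ r.ante, l.atom = p.atom

/-- Positive part of the belief set of a defeasible theory. -/
def BSplus (D : DTheory) : Set Lit := {p | AppearsIn p D ∧ Proves D .prt true p}

/-- Negative part of the belief set of a defeasible theory. -/
def BSminus (D : DTheory) : Set Lit := {p | AppearsIn p D ∧ Proves D .prt false p}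

/-- The belief set of a defeasible theory. -/
def BS (D : DTheory) : Set Lit := BSplus D ∪ BSminus D

/-- Edge of the atom dependency graph: from atom `a` to atom `b` whenever some
rule has head with atom `b` and an antecedent literal with atom `a`. -/
def AtomEdge (D : DTheory) (a b : Atom) : Prop :=
  ∃ r ∈ D.rules, r.head.atom = b ∧ ∃ l ∈ r.ante, l.atom = a

/-- A theory is decisive iff every literal appearing in it is defeasibly
provable or defeasibly refuted. -/
def Decisive (D : DTheory) : Prop :=
  ∀ p : Lit, AppearsIn p D → Proves D .prt true p ∨ Proves D .prt false p

end DL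

/-! The witness is the five-rule theory `⇒ q`, `⇒ ¬q`, `⇒ x`, `⇒ ¬x`, `x ⇒ c` with
`(⇒ ¬q) > (⇒ q)`. The rule for `q` has an empty body, so `+ω q`; but the stronger, applicable
`⇒ ¬q` defeats it, so `−σ q`. The rules for `x` and `¬x` block each other without either being
stronger, so `−∂ x` and hence `−ω c`; yet no stronger rule beats `⇒ x`, so `+σ x` and then
`+σ c`. Consistency holds because `¬q` is the only literal with `+∂`: any other rule is opposed
by an unbeaten rule with empty body or, for `c`, needs `+∂ x`. -/

namespace DL

theorem ValidProof.forall_mem_of_cond {D : DTheory} {I : TLit → Prop}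
    (hI : ∀ P t s q, ValidProof D P → (∀ y ∈ P, I y) → Cond D P t s q → I (t, s, q))
    {P : List TLit} (hP : ValidProof D P) : ∀ y ∈ P, I y := by
  induction hP with
  | nil => simp
  | snoc hP hc ih =>
    simp only [List.mem_append, List.mem_singleton]
    rintro y (hy | rfl)
    exacts [ih y hy, hI _ _ _ _ hP ih hc]

theorem ValidProof.of_cond_take {D : DTheory} {P : List TLit}
    (h : ∀ (i : ℕ) (hi : i < P.length), Cond D (P.take i) P[i].1 P[i].2.1 P[i].2.2) :
    ValidProof D P := by
  induction P using List.reverseRecOn with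
  | nil => exact .nil
  | append_singleton P y ih =>
    refine .snoc (ih fun i hi => ?_) ?_
    · have := h i (by rw [List.length_append]; omega)
      rwa [List.take_append_of_le_length hi.le, List.getElem_append_left hi] at this
    · simpa using h P.length (by simp)

theorem ValidProof.mem_facts_of_delta {D : DTheory} {P : List TLit} (hP : ValidProof D P)
    {q : Lit} (hq : (Tag.delta, true, q) ∈ P) : q ∈ D.facts := by
  refine hP.forall_mem_of_cond (I := fun y => y.1 = .delta → y.2.1 = true → y.2.2 ∈ D.facts)
    ?_ _ hq rfl rfl
  rintro P t s q - - hc ht hs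
  subst ht hs
  exact hc

theorem not_cond_prt_true_of_unbeaten_attacker {D : DTheory} {P : List TLit} {p : Lit}
    (hΔ : (Tag.delta, true, p) ∉ P) {s : Rule} (hs : s ∈ D.rules) (hhead : s.head = p.neg)
    (hante : s.ante = ∅) (hunbeaten : ∀ t, ¬ D.sup t s) : ¬ Cond D P .prt true p := by
  rintro (hp | ⟨-, -, hattack⟩)
  · exact hΔ hp
  · rcases hattack s hs hhead with ⟨a, ha, -⟩ | ⟨t, -, -, -, hts⟩
    · simp [hante] at ha
    · exact hunbeaten t hts

namespace Witness

def q : Lit := ⟨0, true⟩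
def x : Lit := ⟨1, true⟩
def c : Lit := ⟨2, true⟩

def rQ : Rule := ⟨∅, q⟩
def rNotQ : Rule := ⟨∅, q.neg⟩
def rX : Rule := ⟨∅, x⟩
def rNotX : Rule := ⟨∅, x.neg⟩
def rC : Rule := ⟨{x}, c⟩

def theory : DTheory := ⟨∅, {rQ, rNotQ, rX, rNotX, rC}, fun s r => s = rNotQ ∧ r = rQ⟩

theorem mem_rules {r : Rule} :
    r ∈ theory.rules ↔ r = rQ ∨ r = rNotQ ∨ r = rX ∨ r = rNotX ∨ r = rC := by
  simp [theory]

theorem wellFormed : theory.WellFormed := by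
  have : IsTrans Rule theory.sup :=
    ⟨by rintro _ _ _ ⟨-, rfl⟩ ⟨h, -⟩; exact absurd h (by decide)⟩
  refine ⟨by simp [DTheory.FactsConsistent, theory], ?_, ?_⟩
  · rw [Acyclic, Relation.transGen_eq_self]
    rintro r ⟨rfl, h⟩
    exact absurd h (by decide)
  · rintro s r ⟨rfl, rfl⟩
    simp [mem_rules]

theorem eq_neg_q_of_prt_true {P : List TLit} (hP : ValidProof theory P) {l : Lit}
    (hl : (Tag.prt, true, l) ∈ P) : l = q.neg := by
  refine hP.forall_mem_of_cond (I := fun y => y.1 = .prt → y.2.1 = true → y.2.2 = q.neg)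
    ?_ _ hl rfl rfl
  rintro P t s l hP hinv hc rfl rfl
  have hΔ : (Tag.delta, true, l) ∉ P := fun h => by simpa [theory] using hP.mem_facts_of_delta h
  obtain ⟨-, ⟨r, hr, rfl, hbody⟩, -⟩ := hc.resolve_left hΔ
  have blocked : ∀ s ∈ theory.rules, s.head = r.head.neg → s.ante = ∅ → s ≠ rQ → False :=
    fun s hs hhead hante hne =>
      not_cond_prt_true_of_unbeaten_attacker hΔ hs hhead hante (fun _ hts => hne hts.2) hc
  rcases mem_rules.1 hr with rfl | rfl | rfl | rfl | rfl
  · exact (blocked rNotQ (by simp [mem_rules]) rfl rfl (by decide)).elim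
  · rfl
  · exact (blocked rNotX (by simp [mem_rules]) rfl rfl (by decide)).elim
  · exact (blocked rX (by simp [mem_rules]) rfl rfl (by decide)).elim
  · exact absurd (hinv _ (hbody x (by simp [rC])) rfl rfl) (by decide)

theorem consistent : Consistent theory := by
  rintro p ⟨⟨P, hP, hp⟩, ⟨P', hP', hp'⟩⟩
  have h₁ := eq_neg_q_of_prt_true hP hp
  have h₂ := eq_neg_q_of_prt_true hP' hp'
  subst h₁
  exact absurd h₂ (by decide)

def proof : List TLit :=
  [(.sgm, false, q), (.omg, true, q), (.sgm, true, x), (.prt, false, x), (.sgm, true, c),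
   (.omg, false, c)]

theorem proof_valid : ValidProof theory proof :=
  ValidProof.of_cond_take fun i hi => by
    simp only [proof, List.length_cons, List.length_nil] at hi
    interval_cases i <;> simp [proof, Cond, theory, rQ, rNotQ, rX, rNotX, rC, q, x, c, Lit.neg]

end Witness
end DL

open DL in
/-- Neither implication between `+σ` and `+ω` holds in general: there is a
consistent defeasible theory and literals `d`, `c` with `+ω d`, `−σ d`,
`+σ c`, `−ω c`. -/
theorem stmt14 :
    ∃ (D : DTheory) (d c : Lit), D.WellFormed ∧ Consistent D ∧
      Proves D .omg true d ∧ Proves D .sgm false d ∧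
      Proves D .sgm true c ∧ Proves D .omg false c := by
  refine ⟨Witness.theory, Witness.q, Witness.c, Witness.wellFormed, Witness.consistent,
    ?_, ?_, ?_, ?_⟩ <;> exact ⟨Witness.proof, Witness.proof_valid, by simp [Witness.proof]⟩
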